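/- arXiv:1811.08206 — 7 statements merged into one kernel-verified Lean document; each statement's English description precedes it below -/
import Mathlib

section
/- Let I be an ideal on ω. The space c₀(I) of bounded real sequences I-convergent to 0, as a subspace of the bounded sequences with the sup metric, is separable if and only if I = Fin. -/
open Set Filter

/-- An ideal on ω: closed under subsets and finite unions, contains all finite sets, ω ∉ I. -/
def IsIdeal (I : Set (Set ℕ)) : Prop :=
  (∀ A B : Set ℕ, A ∈ I → B ⊆ A → B ∈ I) ∧
  (∀ A ∈ I, ∀ B ∈ I, A ∪ B ∈ I) ∧
  (∀ A : Set ℕ, A.Finite → A ∈ I) ∧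
  (Set.univ : Set ℕ) ∉ I

/-- A real sequence is I-convergent to 0. -/
def IConvZero (I : Set (Set ℕ)) (x : ℕ → ℝ) : Prop :=
  ∀ ε : ℝ, 0 < ε → {n | ε ≤ |x n|} ∈ I

/-- c₀(I) ∩ ℓ∞ : bounded sequences I-convergent to 0 (ℓ∞ = bounded functions ℕ → ℝ, sup norm). -/
def c0I (I : Set (Set ℕ)) : Set (BoundedContinuousFunction ℕ ℝ) :=
  {x | IConvZero I (fun n => x n)}

/-- An I-mad family: I-positive sets, pairwise intersections in I, maximal. -/
def IMad (I : Set (Set ℕ)) (𝒜 : Set (Set ℕ)) : Prop :=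
  (∀ A ∈ 𝒜, A ∉ I) ∧
  (∀ A ∈ 𝒜, ∀ B ∈ 𝒜, A ≠ B → A ∩ B ∈ I) ∧
  (∀ X : Set ℕ, X ∉ I → ∃ A ∈ 𝒜, X ∩ A ∉ I)

/-- The indicator sequence 1_X as an element of ℓ∞. -/
noncomputable def ind (X : Set ℕ) : BoundedContinuousFunction ℕ ℝ :=
  BoundedContinuousFunction.ofNormedAddCommGroupDiscrete (X.indicator 1) 1 (by
    intro n
    by_cases h : n ∈ X <;> simp [Set.indicator_apply, h])

lemma ind_apply (X : Set ℕ) (n : ℕ) : ind X n = X.indicator 1 n := rfl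

/-- Indicators of distinct sets are at distance ≥ 1 in ℓ∞. -/
lemma one_le_dist_ind {X Y : Set ℕ} (h : X ≠ Y) : 1 ≤ dist (ind X) (ind Y) := by
  obtain ⟨n, hn⟩ : ∃ n, (n ∈ X ∧ n ∉ Y) ∨ (n ∈ Y ∧ n ∉ X) := by
    by_contra hc
    push_neg at hc
    refine h (Set.ext fun n => ⟨fun hx => ?_, fun hy => ?_⟩)
    · exact (hc n).1 hx
    · exact (hc n).2 hy
  calc (1 : ℝ) = dist (ind X n) (ind Y n) := by
        rcases hn with ⟨h1, h2⟩ | ⟨h1, h2⟩ <;>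
          simp [ind_apply, Set.indicator_apply, h1, h2, Real.dist_eq]
    _ ≤ dist (ind X) (ind Y) := BoundedContinuousFunction.dist_coe_le_dist n

/-- A finitely-supported rational sequence as an element of ℓ∞. -/
noncomputable def ratSeq (q : ℕ →₀ ℚ) : BoundedContinuousFunction ℕ ℝ :=
  BoundedContinuousFunction.ofNormedAddCommGroupDiscrete (fun n => (q n : ℝ))
    (∑ m ∈ q.support, |(q m : ℝ)|) (by
      intro n
      show ‖((q n : ℚ) : ℝ)‖ ≤ _
      rw [Real.norm_eq_abs]
      by_cases h : n ∈ q.support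
      · exact Finset.single_le_sum (f := fun m => |(q m : ℝ)|)
          (fun m _ => abs_nonneg _) h
      · have : q n = 0 := Finsupp.notMem_support_iff.mp h
        rw [this]
        simpa using Finset.sum_nonneg fun m _ => abs_nonneg ((q m : ℝ)))

lemma ratSeq_apply (q : ℕ →₀ ℚ) (n : ℕ) : ratSeq q n = (q n : ℝ) := rfl

/-- c₀(I) (as a subspace of ℓ∞) is separable iff I = Fin. -/
theorem c0I_separable_iff (I : Set (Set ℕ)) (hI : IsIdeal I) :
    TopologicalSpace.SeparableSpace (c0I I) ↔ I = {A : Set ℕ | A.Finite} := by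
  obtain ⟨hsub, hun, hfin, huniv⟩ := hI
  constructor
  · intro hsep
    -- get a countable set whose closure contains c0I I
    have hsepset : TopologicalSpace.IsSeparable (c0I I) :=
      TopologicalSpace.IsSeparable.of_subtype (c0I I)
    obtain ⟨c, hc_count, hc_closure⟩ := hsepset
    ext A
    simp only [Set.mem_setOf_eq]
    refine ⟨fun hA => ?_, fun h => hfin A h⟩
    by_contra hinf
    have hAinf : A.Infinite := hinf
    let f : ℕ ↪ A := hAinf.natEmbedding
    -- map each subset of ℕ to an indicator in c0I I
    let Y : Set ℕ → Set ℕ := fun S => (fun n => (f n : ℕ)) '' S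
    have hYinj : Function.Injective Y := fun S T hST =>
      Set.image_injective.mpr (fun a b hab => f.injective (Subtype.ext hab)) hST
    have hYsub : ∀ S, Y S ⊆ A := by
      rintro S _ ⟨n, -, rfl⟩; exact (f n).2
    have hmem : ∀ S, ind (Y S) ∈ c0I I := by
      intro S ε hε
      refine hsub A _ hA fun n hn => ?_
      simp only [Set.mem_setOf_eq, ind_apply] at hn
      by_contra hnA
      have hnY : n ∉ Y S := fun hm => hnA (hYsub S hm)
      rw [Set.indicator_of_notMem hnY] at hn
      simp at hn
      linarith
    -- pick a nearby point of c for each subset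
    have hnear : ∀ S : Set ℕ, ∃ b ∈ c, dist (ind (Y S)) b < 1/2 := by
      intro S
      have : ind (Y S) ∈ closure c := hc_closure (hmem S)
      exact Metric.mem_closure_iff.mp this (1/2) (by norm_num)
    choose ψ hψc hψd using hnear
    have hψinj : Function.Injective ψ := by
      intro S T hST
      by_contra hne
      have h1 : (1 : ℝ) ≤ dist (ind (Y S)) (ind (Y T)) :=
        one_le_dist_ind (fun h => hne (hYinj h))
      have h2 : dist (ind (Y S)) (ind (Y T)) < 1 := by
        calc dist (ind (Y S)) (ind (Y T))
            ≤ dist (ind (Y S)) (ψ S) + dist (ψ T) (ind (Y T)) := by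
              rw [hST]; exact dist_triangle _ _ _
          _ < 1/2 + 1/2 := by
              have := hψd T
              rw [dist_comm] at this
              exact add_lt_add (hψd S) this
          _ = 1 := by norm_num
      linarith
    -- contradiction with Cantor
    have : Countable ↥c := hc_count
    let ψ' : Set ℕ → ↥c := fun S => ⟨ψ S, hψc S⟩
    have hψ'inj : Function.Injective ψ' := fun S T h =>
      hψinj (congrArg Subtype.val h)
    have : Countable (Set ℕ) := hψ'inj.countable
    obtain ⟨g, hg⟩ := this.exists_injective_nat'
    exact Function.cantor_injective g hg
  · -- I = Fin: c₀ is separable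
    rintro rfl
    have hsep : TopologicalSpace.IsSeparable (c0I {A : Set ℕ | A.Finite}) := by
      refine ⟨Set.range ratSeq, Set.countable_range _, ?_⟩
      intro x hx
      rw [Metric.mem_closure_iff]
      intro ε hε
      have hS : {n | ε/2 ≤ |x n|}.Finite := hx (ε/2) (by linarith)
      -- choose rational approximations on the finite set
      have hchoice : ∀ n : ℕ, ∃ q : ℚ, |x n - (q : ℝ)| < ε/2 :=
        fun n => exists_rat_near (x n) (by linarith)
      choose r hr using hchoice
      let r' : ℕ → ℚ := fun n => if ε/2 ≤ |x n| then r n else 0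
      have hsupp : (Function.support r').Finite := by
        refine hS.subset fun n hn => ?_
        simp only [Function.mem_support, r'] at hn
        by_contra hnot
        simp only [Set.mem_setOf_eq] at hnot
        rw [if_neg hnot] at hn
        exact hn rfl
      refine ⟨ratSeq (Finsupp.ofSupportFinite r' hsupp), Set.mem_range_self _, ?_⟩
      have hle : dist x (ratSeq (Finsupp.ofSupportFinite r' hsupp)) ≤ ε/2 := by
        rw [BoundedContinuousFunction.dist_le (by linarith)]
        intro n
        rw [ratSeq_apply, Real.dist_eq]
        have hcoe : (Finsupp.ofSupportFinite r' hsupp) n = r' n := by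
          rw [Finsupp.ofSupportFinite_coe]
        rw [hcoe]
        by_cases hn : ε/2 ≤ |x n|
        · simp only [r', if_pos hn]
          exact (hr n).le
        · simp only [r', if_neg hn]
          push_neg at hn
          simpa using hn.le
      linarith
    exact hsep.separableSpace
end

section
/- Let I be an ideal on ω and suppose there is a finite-to-one function f : ω → ω such that f⁻¹(A) ∈ I if and only if A is finite. Then there exists an I-mad family of cardinality continuum, i.e., an I-almost-disjoint family of size 𝔠 consisting of I-positive sets that is maximal with respect to inclusion. -/
open Set Filter

/-- Auxiliary: the branch set of a binary sequence. -/
def branchSet (s : ℕ → Bool) : Set ℕ :=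
  Set.range (fun n => Encodable.encode (List.ofFn (fun i : Fin n => s i)))

lemma branch_enc_eq {s t : ℕ → Bool} {n m : ℕ}
    (h : Encodable.encode (List.ofFn fun i : Fin n => s i)
       = Encodable.encode (List.ofFn fun i : Fin m => t i)) :
    n = m ∧ ∀ i, i < n → s i = t i := by
  have h' := Encodable.encode_injective h
  have hnm : n = m := by simpa using congrArg List.length h'
  subst hnm
  refine ⟨rfl, fun i hi => ?_⟩
  rw [List.ofFn_inj] at h'
  exact congrFun h' ⟨i, hi⟩

lemma branchSet_infinite (s : ℕ → Bool) : (branchSet s).Infinite := by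
  apply Set.infinite_range_of_injective
  intro n m h
  exact (branch_enc_eq h).1

lemma branchSet_inter_finite {s t : ℕ → Bool} (hst : s ≠ t) :
    (branchSet s ∩ branchSet t).Finite := by
  obtain ⟨N, hN⟩ : ∃ N, s N ≠ t N := by
    by_contra h
    push_neg at h
    exact hst (funext h)
  apply Set.Finite.subset
    (Set.Finite.image (fun n => Encodable.encode (List.ofFn (fun i : Fin n => s i)))
      (Set.finite_Iic N))
  rintro x ⟨⟨n, rfl⟩, ⟨m, hm⟩⟩
  obtain ⟨hnm, hlt⟩ := branch_enc_eq hm.symm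
  refine ⟨n, ?_, rfl⟩
  simp only [Set.mem_Iic]
  by_contra hc
  exact hN (hlt N (lt_of_not_ge hc))

/-- if Fin ≤_RB I via a finite-to-one f, then there is an I-mad family of
cardinality continuum. -/
theorem exists_IMad_of_finiteToOne (I : Set (Set ℕ)) (hI : IsIdeal I)
    (f : ℕ → ℕ) (hf : ∀ n : ℕ, (f ⁻¹' {n}).Finite)
    (hfI : ∀ A : Set ℕ, f ⁻¹' A ∈ I ↔ A.Finite) :
    ∃ 𝒜 : Set (Set ℕ), IMad I 𝒜 ∧ Cardinal.mk 𝒜 = Cardinal.continuum := by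
  obtain ⟨hdown, hunion, hfin, huniv⟩ := hI
  -- the pulled-back family
  set g : (ℕ → Bool) → Set ℕ := fun s => f ⁻¹' (branchSet s) with hg
  have hgpos : ∀ s, g s ∉ I := by
    intro s hmem
    exact (branchSet_infinite s) ((hfI _).1 hmem)
  have hgad : ∀ s t, s ≠ t → g s ∩ g t ∈ I := by
    intro s t hst
    have : g s ∩ g t = f ⁻¹' (branchSet s ∩ branchSet t) := rfl
    rw [this]
    exact (hfI _).2 (branchSet_inter_finite hst)
  have hginj : Function.Injective g := by
    intro s t h
    by_contra hst
    have h1 : g s ∩ g t ∈ I := hgad s t hst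
    rw [h, Set.inter_self] at h1
    exact hgpos t h1
  -- the collection of I-AD families extending the range of g
  set S : Set (Set (Set ℕ)) :=
    {B | (∀ A ∈ B, A ∉ I) ∧ (∀ A ∈ B, ∀ C ∈ B, A ≠ C → A ∩ C ∈ I)} with hS
  have hbase : Set.range g ∈ S := by
    constructor
    · rintro A ⟨s, rfl⟩; exact hgpos s
    · rintro A ⟨s, rfl⟩ C ⟨t, rfl⟩ hAC
      exact hgad s t (fun h => hAC (by rw [h]))
  obtain ⟨𝒜, hsub, h𝒜S, hmax⟩ :
      ∃ m, Set.range g ⊆ m ∧ m ∈ S ∧ ∀ B ∈ S, m ⊆ B → B = m := by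
    obtain ⟨m, hm1, hm2⟩ := zorn_subset_nonempty S (fun c hcS hchain hcne => by
      refine ⟨⋃₀ c, ⟨?_, ?_⟩, fun s hs => Set.subset_sUnion_of_mem hs⟩
      · rintro A ⟨B, hB, hAB⟩
        exact (hcS hB).1 A hAB
      · rintro A ⟨B, hB, hAB⟩ C ⟨B', hB', hCB'⟩ hAC
        rcases hchain.total hB hB' with h | h
        · exact (hcS hB').2 A (h hAB) C hCB' hAC
        · exact (hcS hB).2 A hAB C (h hCB') hAC) (Set.range g) hbase
    exact ⟨m, hm1, hm2.1, fun B hB hmB => (hm2.eq_of_subset hB hmB).symm⟩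
  refine ⟨𝒜, ⟨h𝒜S.1, h𝒜S.2, ?_⟩, ?_⟩
  · -- madness from maximality
    intro X hX
    by_contra hcon
    push_neg at hcon
    have hXA : ∀ A ∈ 𝒜, X ∩ A ∈ I := hcon
    have hS' : insert X 𝒜 ∈ S := by
      constructor
      · rintro A (rfl | hA)
        · exact hX
        · exact h𝒜S.1 A hA
      · rintro A (rfl | hA) C (rfl | hC) hAC
        · exact absurd rfl hAC
        · exact hXA C hC
        · rw [Set.inter_comm]; exact hXA A hA
        · exact h𝒜S.2 A hA C hC hAC
    have : insert X 𝒜 = 𝒜 := hmax _ hS' (Set.subset_insert _ _)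
    have hX𝒜 : X ∈ 𝒜 := this ▸ Set.mem_insert X 𝒜
    have : X ∩ X ∈ I := hXA X hX𝒜
    rw [Set.inter_self] at this
    exact hX this
  · -- cardinality
    have hle : Cardinal.mk 𝒜 ≤ Cardinal.continuum := by
      calc Cardinal.mk 𝒜 ≤ Cardinal.mk (Set ℕ) := Cardinal.mk_set_le _
        _ = 2 ^ Cardinal.aleph0 := by rw [Cardinal.mk_set, Cardinal.mk_nat]
        _ = Cardinal.continuum := Cardinal.two_power_aleph0
    have hge : Cardinal.continuum ≤ Cardinal.mk 𝒜 := by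
      have h1 : Cardinal.mk (ℕ → Bool) = Cardinal.continuum := by
        rw [Cardinal.mk_arrow]
        simp only [Cardinal.mk_bool, Cardinal.mk_nat, Cardinal.lift_id,
          Cardinal.lift_aleph0, Cardinal.lift_ofNat]
        exact Cardinal.two_power_aleph0
      calc Cardinal.continuum = Cardinal.mk (ℕ → Bool) := h1.symm
        _ = Cardinal.mk (Set.range g) := (Cardinal.mk_range_eq g hginj).symm
        _ ≤ Cardinal.mk 𝒜 := Cardinal.mk_le_mk_of_subset hsub
    exact le_antisymm hle hge
end

section
/- Let I be an ideal on ω admitting an uncountable I-mad family. Then there is no continuous linear projection from ℓ∞ onto c₀(I) ∩ ℓ∞ (the bounded sequences I-convergent to 0). -/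
open Set Filter

lemma ideal_biUnion {I : Set (Set ℕ)} (hI : IsIdeal I) {α : Type*} [DecidableEq α] (S : Finset α)
    (g : α → Set ℕ) (hg : ∀ a ∈ S, g a ∈ I) : (⋃ a ∈ S, g a) ∈ I := by
  induction S using Finset.induction_on with
  | empty => simpa using hI.2.2.1 ∅ Set.finite_empty
  | @insert a s ha ih =>
    rw [Finset.set_biUnion_insert]
    exact hI.2.1 _ (hg a (Finset.mem_insert_self a s)) _
      (ih fun b hb => hg b (Finset.mem_insert_of_mem hb))

section Key

variable (I : Set (Set ℕ)) (hI : IsIdeal I) (𝒜 : Set (Set ℕ)) (h𝒜 : IMad I 𝒜)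
  (π : BoundedContinuousFunction ℕ ℝ →L[ℝ] BoundedContinuousFunction ℕ ℝ)
  (hid : ∀ x ∈ c0I I, π x = x)

/-- the residual functional at coordinate n -/
noncomputable def resid (π : BoundedContinuousFunction ℕ ℝ →L[ℝ] BoundedContinuousFunction ℕ ℝ)
    (n : ℕ) (x : BoundedContinuousFunction ℕ ℝ) : ℝ := x n - π x n

lemma resid_bound (n : ℕ) (x : BoundedContinuousFunction ℕ ℝ) :
    |resid π n x| ≤ (1 + ‖π‖) * ‖x‖ := by
  have h1 : |x n| ≤ ‖x‖ := x.norm_coe_le_norm n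
  have h2 : |π x n| ≤ ‖π x‖ := (π x).norm_coe_le_norm n
  have h3 : ‖π x‖ ≤ ‖π‖ * ‖x‖ := π.le_opNorm x
  show |x n - π x n| ≤ (1 + ‖π‖) * ‖x‖
  have h4 := abs_sub (x n) (π x n)
  nlinarith [norm_nonneg x]

include hI h𝒜 hid in
lemma key_card (n : ℕ) (δ : ℝ) (hδ : 0 < δ) (S : Finset (Set ℕ)) (hS : ↑S ⊆ 𝒜)
    (hSδ : ∀ A ∈ S, δ ≤ |resid π n (ind A)|) : (S.card : ℝ) * δ ≤ 1 + ‖π‖ := by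
  classical
  set ε : Set ℕ → ℝ := fun A => if 0 ≤ resid π n (ind A) then 1 else -1 with hε
  have hεabs : ∀ A, ε A * resid π n (ind A) = |resid π n (ind A)| := by
    intro A
    simp only [hε]
    by_cases h : 0 ≤ resid π n (ind A)
    · rw [if_pos h, one_mul, abs_of_nonneg h]
    · rw [if_neg h, abs_of_neg (lt_of_not_ge h)]; ring
  set x : BoundedContinuousFunction ℕ ℝ := ∑ A ∈ S, ε A • ind A with hx
  have hxapp : ∀ m, x m = ∑ A ∈ S, ε A * (A.indicator 1 m) := by
    intro m
    rw [hx]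
    rw [BoundedContinuousFunction.coe_sum]
    simp [ind_apply]
  set E : Set ℕ := ⋃ A ∈ S, ⋃ B ∈ S.erase A, A ∩ B with hE
  have hEI : E ∈ I := by
    apply ideal_biUnion hI
    intro A hA
    apply ideal_biUnion hI
    intro B hB
    exact h𝒜.2.1 A (hS hA) B (hS (Finset.mem_of_mem_erase hB))
      (Ne.symm (Finset.ne_of_mem_erase hB))
  -- y : x truncated off E
  have hybd : ∀ m, ‖(if m ∈ E then 0 else x m : ℝ)‖ ≤ 1 := by
    intro m
    by_cases hm : m ∈ E
    · simp [hm]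
    · simp only [hm, if_false]
      rw [Real.norm_eq_abs, hxapp]
      by_cases hex : ∃ A₀ ∈ S, m ∈ A₀
      · obtain ⟨A₀, hA₀S, hmA₀⟩ := hex
        rw [Finset.sum_eq_single A₀]
        · rw [Set.indicator_of_mem hmA₀]
          by_cases h : 0 ≤ resid π n (ind A₀) <;> simp [hε, h]
        · intro B hBS hBne
          have : m ∉ B := by
            intro hmB
            exact hm (Set.mem_biUnion hA₀S (Set.mem_biUnion
              (Finset.mem_erase.mpr ⟨hBne, hBS⟩) ⟨hmA₀, hmB⟩))
          simp [Set.indicator_of_notMem this]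
        · intro h; exact absurd hA₀S h
      · push_neg at hex
        rw [Finset.sum_eq_zero]
        · simp
        · intro B hB; simp [Set.indicator_of_notMem (hex B hB)]
  set y : BoundedContinuousFunction ℕ ℝ :=
    BoundedContinuousFunction.ofNormedAddCommGroupDiscrete
      (fun m => if m ∈ E then 0 else x m) 1 hybd with hy
  have hynorm : ‖y‖ ≤ 1 :=
    BoundedContinuousFunction.norm_ofNormedAddCommGroup_le continuous_of_discreteTopology
      zero_le_one hybd
  have hyapp : ∀ m, y m = if m ∈ E then 0 else x m := fun m => rfl
  have hz : x - y ∈ c0I I := by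
    intro ε' hε'
    apply hI.1 E _ hEI
    intro m hm
    simp only [Set.mem_setOf_eq] at hm
    by_contra hmE
    have : x m - y m = 0 := by rw [hyapp]; simp [hmE]
    simp only [BoundedContinuousFunction.coe_sub, Pi.sub_apply] at hm
    rw [this] at hm
    simp at hm
    linarith
  have hresz : resid π n (x - y) = 0 := by
    unfold resid
    rw [hid _ hz]
    ring
  -- resid is linear in x:
  have hlin : resid π n x = ∑ A ∈ S, ε A * resid π n (ind A) := by
    unfold resid
    rw [hx, map_sum]
    rw [BoundedContinuousFunction.coe_sum, BoundedContinuousFunction.coe_sum]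
    rw [Finset.sum_apply, Finset.sum_apply, ← Finset.sum_sub_distrib]
    apply Finset.sum_congr rfl
    intro A hA
    simp [resid]
    ring
  have hsum : (S.card : ℝ) * δ ≤ resid π n x := by
    rw [hlin]
    calc (S.card : ℝ) * δ = ∑ _A ∈ S, δ := by rw [Finset.sum_const]; simp [mul_comm]
    _ ≤ ∑ A ∈ S, ε A * resid π n (ind A) := by
        apply Finset.sum_le_sum
        intro A hA
        rw [hεabs]
        exact hSδ A hA
  have hcalc : resid π n x = resid π n y := by
    have : resid π n x - resid π n y = resid π n (x - y) := by
      unfold resid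
      rw [map_sub]
      simp
      ring
    rw [hresz] at this
    linarith
  have := resid_bound π n y
  rw [hcalc] at hsum
  have hb : |resid π n y| ≤ (1 + ‖π‖) * 1 := by
    apply le_trans this
    apply mul_le_mul_of_nonneg_left hynorm
    positivity
  calc (S.card : ℝ) * δ ≤ resid π n y := hsum
  _ ≤ |resid π n y| := le_abs_self _
  _ ≤ 1 + ‖π‖ := by linarith

end Key

section Key2
variable (I : Set (Set ℕ)) (hI : IsIdeal I) (𝒜 : Set (Set ℕ)) (h𝒜 : IMad I 𝒜)
  (π : BoundedContinuousFunction ℕ ℝ →L[ℝ] BoundedContinuousFunction ℕ ℝ)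
  (hid : ∀ x ∈ c0I I, π x = x)

include hI h𝒜 hid in
lemma finite_big (n : ℕ) (δ : ℝ) (hδ : 0 < δ) :
    {A | A ∈ 𝒜 ∧ δ ≤ |resid π n (ind A)|}.Finite := by
  by_contra hfin
  have hinf : {A | A ∈ 𝒜 ∧ δ ≤ |resid π n (ind A)|}.Infinite := hfin
  obtain ⟨m, hm⟩ := exists_nat_gt ((1 + ‖π‖) / δ)
  obtain ⟨t, hts, htc⟩ := hinf.exists_subset_card_eq m
  have h1 := key_card I hI 𝒜 h𝒜 π hid n δ hδ t (fun A hA => (hts hA).1) (fun A hA => (hts hA).2)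
  rw [htc] at h1
  rw [div_lt_iff₀ hδ] at hm
  linarith

include hI h𝒜 hid in
lemma countable_nonzero (n : ℕ) : {A | A ∈ 𝒜 ∧ resid π n (ind A) ≠ 0}.Countable := by
  have hsub : {A | A ∈ 𝒜 ∧ resid π n (ind A) ≠ 0} ⊆
      ⋃ k : ℕ, {A | A ∈ 𝒜 ∧ 1/(k+1) ≤ |resid π n (ind A)|} := by
    rintro A ⟨hA, hne⟩
    have hpos : 0 < |resid π n (ind A)| := abs_pos.mpr hne
    obtain ⟨k, hk⟩ := exists_nat_one_div_lt hpos
    exact Set.mem_iUnion.mpr ⟨k, hA, le_of_lt hk⟩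
  refine Set.Countable.mono hsub (Set.countable_iUnion fun k => ?_)
  exact (finite_big I hI 𝒜 h𝒜 π hid n (1/(k+1)) (by positivity)).countable

end Key2

/-- if I admits an uncountable I-mad family, there is no continuous linear
projection from ℓ∞ onto c₀(I) ∩ ℓ∞. -/
theorem no_projection_onto_c0I (I : Set (Set ℕ)) (hI : IsIdeal I)
    (𝒜 : Set (Set ℕ)) (h𝒜 : IMad I 𝒜) (hunc : ¬ 𝒜.Countable) :
    ¬ ∃ π : BoundedContinuousFunction ℕ ℝ →L[ℝ] BoundedContinuousFunction ℕ ℝ,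
        Set.range π = c0I I ∧ ∀ x ∈ c0I I, π x = x := by
  rintro ⟨π, hrange, hid⟩
  set B : Set (Set ℕ) := ⋃ n : ℕ, {A | A ∈ 𝒜 ∧ resid π n (ind A) ≠ 0} with hB
  have hBc : B.Countable := Set.countable_iUnion fun n => countable_nonzero I hI 𝒜 h𝒜 π hid n
  have hex : ∃ A ∈ 𝒜, A ∉ B := by
    by_contra h
    push_neg at h
    exact hunc (hBc.mono h)
  obtain ⟨A, hA, hAB⟩ := hex
  have hres : ∀ n, resid π n (ind A) = 0 := by
    intro n
    by_contra hne
    exact hAB (Set.mem_iUnion.mpr ⟨n, hA, hne⟩)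
  have hπA : π (ind A) = ind A := by
    ext m
    have := hres m
    unfold resid at this
    linarith
  have hmem : ind A ∈ c0I I := by
    rw [← hrange]
    exact ⟨ind A, hπA⟩
  have h1 := hmem 1 one_pos
  have hsub : A ⊆ {n | (1:ℝ) ≤ |ind A n|} := by
    intro m hm
    simp [ind_apply, Set.indicator_of_mem hm]
  exact h𝒜.1 A hA (hI.1 _ A h1 hsub)
end

section
/- Let T : ℓ∞ → ℓ∞ be a bounded linear operator vanishing on c₀(I) ∩ ℓ∞, and let (A_j : j ∈ J) be an uncountable I-almost-disjoint family of I-positive sets. Then there exists j ∈ J such that T(x) = 0 for every bounded sequence x supported on A_j. -/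
open Set Filter

lemma biUnion_finset_mem_ideal {I : Set (Set ℕ)} (hI : IsIdeal I) {α : Type*} (s : Finset α)
    (C : α → Set ℕ) (h : ∀ i ∈ s, C i ∈ I) : (⋃ i ∈ s, C i) ∈ I := by
  classical
  induction s using Finset.induction_on with
  | empty => simpa using hI.2.2.1 ∅ Set.finite_empty
  | @insert a s' ha ih =>
      rw [Finset.set_biUnion_insert]
      exact hI.2.1 _ (h a (Finset.mem_insert_self a s')) _
        (ih fun i hi => h i (Finset.mem_insert_of_mem hi))

lemma supported_mem_c0I {I : Set (Set ℕ)} (hI : IsIdeal I) {S : Set ℕ} (hS : S ∈ I)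
    (x : BoundedContinuousFunction ℕ ℝ) (hx : ∀ n, n ∉ S → x n = 0) : x ∈ c0I I := by
  intro ε hε
  refine hI.1 S _ hS ?_
  intro n hn
  by_contra hns
  simp only [Set.mem_setOf_eq] at hn
  rw [hx n hns, abs_zero] at hn
  linarith

/-- if T vanishes on c₀(I) ∩ ℓ∞ and (A j) is an uncountable I-almost-disjoint
family of I-positive sets, then T kills all bounded sequences supported on some A j. -/
theorem exists_index_T_vanishes (I : Set (Set ℕ)) (hI : IsIdeal I)
    (T : BoundedContinuousFunction ℕ ℝ →L[ℝ] BoundedContinuousFunction ℕ ℝ)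
    (hT : ∀ x ∈ c0I I, T x = 0)
    (J : Type) (hJ : ¬ Countable J) (A : J → Set ℕ)
    (hpos : ∀ j : J, A j ∉ I)
    (had : ∀ i j : J, i ≠ j → A i ∩ A j ∈ I) :
    ∃ j : J, ∀ x : BoundedContinuousFunction ℕ ℝ,
      (∀ n : ℕ, n ∉ A j → x n = 0) → T x = 0 := by
  classical
  by_contra hcon
  push_neg at hcon
  -- normalize witnesses
  have hcon' : ∀ j, ∃ x : BoundedContinuousFunction ℕ ℝ,
      (∀ n, n ∉ A j → x n = 0) ∧ ‖x‖ ≤ 1 ∧ T x ≠ 0 := by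
    intro j
    obtain ⟨x, hsupp, hTx⟩ := hcon j
    have hx0 : x ≠ 0 := by rintro rfl; simp at hTx
    have hn : ‖x‖ ≠ 0 := norm_ne_zero_iff.mpr hx0
    refine ⟨‖x‖⁻¹ • x, ?_, ?_, ?_⟩
    · intro n hn'
      simp [hsupp n hn']
    · rw [norm_smul _ x, norm_inv, norm_norm, inv_mul_cancel₀ hn]
    · rw [map_smul]
      simp only [ne_eq, smul_eq_zero, inv_eq_zero, norm_eq_zero, not_or]
      exact ⟨hx0, hTx⟩
  choose x hsupp hnorm hTx using hcon'
  have hne : ∀ j, ∃ n, (T (x j)) n ≠ 0 := by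
    intro j
    by_contra h
    push_neg at h
    exact hTx j (BoundedContinuousFunction.ext fun n => by simpa using h n)
  choose nn hnn using hne
  have hm : ∀ j, ∃ m : ℕ, 1 / (m + 1 : ℝ) < |(T (x j)) (nn j)| :=
    fun j => exists_nat_one_div_lt (abs_pos.mpr (hnn j))
  choose mm hmm using hm
  set f : J → ℕ × ℕ × Bool := fun j => (nn j, mm j, decide (0 ≤ (T (x j)) (nn j))) with hf
  have hfib : ∃ c, (f ⁻¹' {c}).Infinite := by
    by_contra h
    push_neg at h
    have huniv : (Set.univ : Set J) = ⋃ c, f ⁻¹' {c} := by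
      ext j; simp
    have : (Set.univ : Set J).Countable := by
      rw [huniv]
      exact Set.countable_iUnion fun c => (h c).countable
    exact hJ (Set.countable_univ_iff.mp this)
  obtain ⟨⟨n₀, m₀, b⟩, hfib⟩ := hfib
  set δ : ℝ := 1 / (m₀ + 1 : ℝ) with hδdef
  have hδ : 0 < δ := by positivity
  set k : ℕ := ⌈‖T‖ * (m₀ + 1 : ℝ)⌉₊ + 1 with hk
  obtain ⟨t, hts, htc⟩ := hfib.exists_subset_card_eq k
  -- facts for j ∈ t
  have hfj : ∀ j ∈ t, nn j = n₀ ∧ mm j = m₀ ∧ decide (0 ≤ (T (x j)) (nn j)) = b := by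
    intro j hj
    have := hts hj
    simp only [Set.mem_preimage, Set.mem_singleton_iff, hf, Prod.mk.injEq] at this
    exact this
  have hv : ∀ j ∈ t, δ ≤ |(T (x j)) n₀| := by
    intro j hj
    obtain ⟨h1, h2, _⟩ := hfj j hj
    have := hmm j
    rw [h1, h2] at this
    exact le_of_lt this
  have hsign : ∀ j ∈ t, decide (0 ≤ (T (x j)) n₀) = b := by
    intro j hj
    obtain ⟨h1, _, h3⟩ := hfj j hj
    rw [h1] at h3
    exact h3
  -- restricted functions
  set B : J → Set ℕ := fun j => A j \ ⋃ i ∈ t.erase j, A i with hB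
  have hybd : ∀ j, ∀ n : ℕ, ‖(B j).indicator (⇑(x j)) n‖ ≤ 1 := by
    intro j n
    by_cases h : n ∈ B j
    · rw [Set.indicator_of_mem h]
      exact le_trans ((x j).norm_coe_le_norm n) (hnorm j)
    · rw [Set.indicator_of_notMem h]
      simp
  set y : J → BoundedContinuousFunction ℕ ℝ := fun j =>
    BoundedContinuousFunction.ofNormedAddCommGroupDiscrete ((B j).indicator (⇑(x j))) 1
      (hybd j) with hy
  have hyapp : ∀ j, ∀ n : ℕ, y j n = (B j).indicator (⇑(x j)) n := fun j n => rfl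
  -- T (y j) = T (x j)
  have key1 : ∀ j ∈ t, T (y j) = T (x j) := by
    intro j hj
    have hSmem : (⋃ i ∈ t.erase j, (A j ∩ A i)) ∈ I := by
      refine biUnion_finset_mem_ideal hI _ _ ?_
      intro i hi
      exact had j i (Ne.symm (Finset.ne_of_mem_erase hi))
    have hdiff : T (x j - y j) = 0 := by
      refine hT _ (supported_mem_c0I hI hSmem _ ?_)
      intro n hn
      simp only [BoundedContinuousFunction.coe_sub, Pi.sub_apply]
      rw [hyapp]
      by_cases hnB : n ∈ B j
      · rw [Set.indicator_of_mem hnB]; ring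
      · rw [Set.indicator_of_notMem hnB]
        by_cases hnA : n ∈ A j
        · exfalso
          have : n ∈ ⋃ i ∈ t.erase j, A i := by
            by_contra hcontra
            exact hnB ⟨hnA, hcontra⟩
          simp only [Set.mem_iUnion] at this
          obtain ⟨i, hi, hni⟩ := this
          exact hn (Set.mem_biUnion hi ⟨hnA, hni⟩)
        · rw [hsupp j n hnA]; ring
    have := T.map_sub (x j) (y j)
    rw [hdiff] at this
    exact (sub_eq_zero.mp this.symm).symm
  -- the sum
  set z : BoundedContinuousFunction ℕ ℝ := ∑ j ∈ t, y j with hz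
  have hznorm : ‖z‖ ≤ 1 := by
    rw [BoundedContinuousFunction.norm_le zero_le_one]
    intro n
    have hzn : z n = ∑ j ∈ t, y j n := by
      rw [hz, BoundedContinuousFunction.coe_sum, Finset.sum_apply]
    rw [hzn]
    by_cases hc : ∃ j ∈ t, n ∈ B j
    · obtain ⟨j₀, hj₀t, hj₀⟩ := hc
      rw [Finset.sum_eq_single_of_mem j₀ hj₀t ?_]
      · rw [hyapp, Set.indicator_of_mem hj₀]
        exact le_trans ((x j₀).norm_coe_le_norm n) (hnorm j₀)
      · intro j hj hne
        rw [hyapp]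
        refine Set.indicator_of_notMem ?_ _
        intro hnBj
        have hj₀e : j₀ ∈ t.erase j := Finset.mem_erase.mpr ⟨fun h => hne h.symm, hj₀t⟩
        exact hnBj.2 (Set.mem_biUnion hj₀e hj₀.1)
    · push_neg at hc
      have : ∀ j ∈ t, y j n = 0 := by
        intro j hj
        rw [hyapp]
        exact Set.indicator_of_notMem (hc j hj) _
      rw [Finset.sum_eq_zero this]
      simp
  have hTz : T z = ∑ j ∈ t, T (x j) := by
    rw [hz, map_sum]
    exact Finset.sum_congr rfl key1
  have hTzapp : (T z) n₀ = ∑ j ∈ t, (T (x j)) n₀ := by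
    rw [hTz, BoundedContinuousFunction.coe_sum, Finset.sum_apply]
  -- lower bound on |(T z) n₀|
  have hlb : (k : ℝ) * δ ≤ |(T z) n₀| := by
    rw [hTzapp]
    rcases Bool.eq_false_or_eq_true b with hb | hb
    · -- all positive
      have hposi : ∀ j ∈ t, δ ≤ (T (x j)) n₀ := by
        intro j hj
        have hs := hsign j hj
        rw [hb] at hs
        have hge : 0 ≤ (T (x j)) n₀ := of_decide_eq_true hs
        have := hv j hj
        rwa [abs_of_nonneg hge] at this
      have hsum : t.card • δ ≤ ∑ j ∈ t, (T (x j)) n₀ :=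
        Finset.card_nsmul_le_sum t _ _ hposi
      rw [htc, nsmul_eq_mul] at hsum
      exact le_trans hsum (le_abs_self _)
    · -- all negative
      have hneg : ∀ j ∈ t, (T (x j)) n₀ ≤ -δ := by
        intro j hj
        have hs := hsign j hj
        rw [hb] at hs
        have hlt : ¬ (0 ≤ (T (x j)) n₀) := of_decide_eq_false hs
        push_neg at hlt
        have := hv j hj
        rw [abs_of_neg hlt] at this
        linarith
      have hsum : ∑ j ∈ t, (T (x j)) n₀ ≤ t.card • (-δ) :=
        Finset.sum_le_card_nsmul t _ _ hneg
      rw [htc, nsmul_eq_mul] at hsum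
      have : (k : ℝ) * δ ≤ -(∑ j ∈ t, (T (x j)) n₀) := by linarith
      exact le_trans this (neg_le_abs _)
  -- upper bound
  have hub : |(T z) n₀| ≤ ‖T‖ := by
    calc |(T z) n₀| = ‖(T z) n₀‖ := rfl
      _ ≤ ‖T z‖ := (T z).norm_coe_le_norm n₀
      _ ≤ ‖T‖ * ‖z‖ := T.le_opNorm z
      _ ≤ ‖T‖ * 1 := by
          exact mul_le_mul_of_nonneg_left hznorm (norm_nonneg T)
      _ = ‖T‖ := mul_one _
  -- contradiction
  have hkgt : ‖T‖ < (k : ℝ) * δ := by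
    have h1 : ‖T‖ * (m₀ + 1 : ℝ) ≤ (⌈‖T‖ * (m₀ + 1 : ℝ)⌉₊ : ℝ) := Nat.le_ceil _
    have h2 : ((⌈‖T‖ * (m₀ + 1 : ℝ)⌉₊ : ℕ) : ℝ) < (k : ℝ) := by
      rw [hk]; push_cast; linarith
    have h3 : ‖T‖ * (m₀ + 1 : ℝ) < (k : ℝ) := lt_of_le_of_lt h1 h2
    have h4 : ‖T‖ = (‖T‖ * (m₀ + 1 : ℝ)) * δ := by
      rw [hδdef]; field_simp
    rw [h4]
    exact mul_lt_mul_of_pos_right h3 hδ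
  linarith
end

section
/- Let T : ℓ∞ → ℓ∞ be a bounded linear operator vanishing on c₀(I) ∩ ℓ∞, let F be a finite set of pairwise I-almost-disjoint sets, and for each A ∈ F let x_A be a bounded sequence supported on A with ‖x_A‖∞ ≤ 1. Suppose there exist m ∈ ω and ε > 0 with x_{A,m} ≥ ε for all A ∈ F. Then ‖T(∑_{A∈F} x_A)‖∞ ≤ ‖T‖, and hence if additionally ‖T(∑_{A∈F} x_A)‖∞ ≥ |F|·ε then |F| ≤ ‖T‖/ε. -/
open Set Filter

lemma biUnion_mem_ideal {α : Type*} (I : Set (Set ℕ)) (hI : IsIdeal I)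
    (G : Finset α) (f : α → Set ℕ) (h : ∀ a ∈ G, f a ∈ I) :
    (⋃ a ∈ G, f a) ∈ I := by
  classical
  induction G using Finset.induction with
  | empty => simpa using hI.2.2.1 ∅ Set.finite_empty
  | insert a t ha ih =>
    rw [Finset.set_biUnion_insert]
    exact hI.2.1 _ (h _ (Finset.mem_insert_self _ _)) _
      (ih fun b hb => h b (Finset.mem_insert_of_mem hb))

/-- the key finite estimate: for F a finite I-almost-disjoint family with
normalized supported sequences bounded below by ε at coordinate m,
‖T(∑ x_A)‖ ≤ ‖T‖, and hence |F|·ε ≤ ‖T(∑ x_A)‖ forces |F| ≤ ‖T‖/ε. -/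
theorem finite_family_estimate (I : Set (Set ℕ)) (hI : IsIdeal I)
    (T : BoundedContinuousFunction ℕ ℝ →L[ℝ] BoundedContinuousFunction ℕ ℝ)
    (hT : ∀ x ∈ c0I I, T x = 0)
    (F : Finset (Set ℕ))
    (had : ∀ A ∈ F, ∀ B ∈ F, A ≠ B → A ∩ B ∈ I)
    (x : Set ℕ → BoundedContinuousFunction ℕ ℝ)
    (hsupp : ∀ A ∈ F, ∀ n : ℕ, n ∉ A → x A n = 0)
    (hnorm : ∀ A ∈ F, ‖x A‖ ≤ 1)
    (m : ℕ) (ε : ℝ) (hε : 0 < ε)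
    (hlow : ∀ A ∈ F, ε ≤ x A m) :
    ‖T (∑ A ∈ F, x A)‖ ≤ ‖T‖ ∧
    ((F.card : ℝ) * ε ≤ ‖T (∑ A ∈ F, x A)‖ → (F.card : ℝ) ≤ ‖T‖ / ε) := by
  classical
  set s := ∑ A ∈ F, x A with hs
  set I₀ : Set ℕ := ⋃ p ∈ (F ×ˢ F : Finset (Set ℕ × Set ℕ)),
      (if p.1 ≠ p.2 then p.1 ∩ p.2 else (∅ : Set ℕ)) with hI₀def
  have hI₀ : I₀ ∈ I := by
    apply biUnion_mem_ideal I hI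
    intro p hp
    rcases Finset.mem_product.mp hp with ⟨h1, h2⟩
    by_cases hne : p.1 ≠ p.2
    · simpa [hne] using had _ h1 _ h2 hne
    · simpa [hne] using hI.2.2.1 ∅ Set.finite_empty
  -- the part of s supported on I₀
  set d : BoundedContinuousFunction ℕ ℝ :=
    BoundedContinuousFunction.ofNormedAddCommGroupDiscrete
      (I₀.indicator (fun n => s n)) ‖s‖ (by
        intro n
        by_cases h : n ∈ I₀
        · simpa [Set.indicator_of_mem h] using s.norm_coe_le_norm n
        · simp [Set.indicator_of_notMem h, norm_nonneg]) with hd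
  have hdapp : ∀ n, d n = I₀.indicator (fun n => s n) n := fun n => rfl
  have hdc0 : d ∈ c0I I := by
    intro δ hδ
    apply hI.1 I₀ _ hI₀
    intro n hn
    by_contra hnI₀
    have : d n = 0 := by rw [hdapp]; exact Set.indicator_of_notMem hnI₀ _
    simp only [Set.mem_setOf_eq, this, abs_zero] at hn
    linarith
  have hTd : T d = 0 := hT d hdc0
  have hTs : T s = T (s - d) := by
    rw [map_sub, hTd, sub_zero]
  have hsd : ‖s - d‖ ≤ 1 := by
    apply BoundedContinuousFunction.norm_le (by norm_num) |>.mpr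
    intro n
    by_cases hn : n ∈ I₀
    · have : (s - d) n = 0 := by
        simp [hdapp, Set.indicator_of_mem hn]
      simp [this]
    · have hdn : d n = 0 := by rw [hdapp]; exact Set.indicator_of_notMem hn _
      have hsn : (s - d) n = ∑ A ∈ F, x A n := by
        simp [hdn, hs, BoundedContinuousFunction.coe_sum, Finset.sum_apply]
      rw [hsn]
      by_cases hA : ∃ A ∈ F, n ∈ A
      · obtain ⟨A, hAF, hnA⟩ := hA
        have hrest : ∀ B ∈ F, B ≠ A → x B n = 0 := by
          intro B hBF hBA
          by_cases hnB : n ∈ B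
          · refine absurd ?_ hn
            rw [hI₀def]
            refine Set.mem_biUnion (show (A, B) ∈ F ×ˢ F from
              Finset.mem_product.mpr ⟨hAF, hBF⟩) ?_
            simp only [Ne.symm hBA, ne_eq, not_false_eq_true, if_true]
            exact ⟨hnA, hnB⟩
          · exact hsupp B hBF n hnB
        rw [Finset.sum_eq_single A hrest (fun h => absurd hAF h)]
        calc |x A n| ≤ ‖x A‖ := (x A).norm_coe_le_norm n
          _ ≤ 1 := hnorm A hAF
      · push_neg at hA
        have : ∀ A ∈ F, x A n = 0 := fun A hAF => hsupp A hAF n (hA A hAF)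
        rw [Finset.sum_eq_zero this]; norm_num
  have key : ‖T s‖ ≤ ‖T‖ := by
    rw [hTs]
    calc ‖T (s - d)‖ ≤ ‖T‖ * ‖s - d‖ := T.le_opNorm _
      _ ≤ ‖T‖ * 1 := by
          exact mul_le_mul_of_nonneg_left hsd (norm_nonneg T)
      _ = ‖T‖ := mul_one _
  refine ⟨key, fun h => ?_⟩
  rw [le_div_iff₀ hε]
  linarith
end

section
/- The ideal Z = {S ⊆ ω : |S ∩ [1,n]|/n → 0} of asymptotic density zero sets admits a finite-to-one function f : ω → ω such that f⁻¹(A) ∈ Z if and only if A is finite; consequently there exists an uncountable Z-mad family. -/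
open Set Filter

/-- The asymptotic density zero ideal Z. -/
noncomputable def densityZeroIdeal : Set (Set ℕ) :=
  {S : Set ℕ | Filter.Tendsto
    (fun n : ℕ => (Nat.card ↑(S ∩ Set.Icc 1 n) : ℝ) / n) Filter.atTop (nhds 0)}

/-!
With `f = Nat.log 2`, the fibre over `k` is the block `[2 ^ k, 2 ^ (k + 1))`, which fills half of
`[1, 2 ^ (k + 1)]`; so `f⁻¹' A` has upper density at least `1/2` whenever `A` is infinite, while
preimages of finite sets are finite. Pulling back the continuum many almost disjoint sets of codes
of initial segments of binary sequences therefore gives a `densityZeroIdeal`-almost disjoint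
family of positive sets of size continuum, and Zorn's lemma extends it to a mad family.
-/

lemma finite_mem_densityZeroIdeal {S : Set ℕ} (hS : S.Finite) : S ∈ densityZeroIdeal := by
  refine squeeze_zero (fun n => by positivity) (fun n => ?_)
    (tendsto_const_div_atTop_nhds_zero_nat (S.ncard : ℝ))
  gcongr
  rw [Nat.card_coe_set_eq]
  exact ncard_le_ncard inter_subset_left hS

lemma notMem_densityZeroIdeal_of_frequently {S : Set ℕ} {c : ℝ} (hc : 0 < c)
    (h : ∃ᶠ n : ℕ in atTop, c ≤ (Nat.card ↑(S ∩ Icc 1 n) : ℝ) / n) :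
    S ∉ densityZeroIdeal := fun hS =>
  let ⟨_, hle, hlt⟩ := (h.and_eventually (hS.eventually (gt_mem_nhds hc))).exists
  hle.not_gt hlt

lemma Nat.log_two_preimage_singleton_finite (k : ℕ) : (Nat.log 2 ⁻¹' {k}).Finite :=
  (finite_Iio (2 ^ (k + 1))).subset fun n hn =>
    hn ▸ Nat.lt_pow_succ_log_self one_lt_two n

lemma Nat.Ico_pow_subset_log_two_preimage (k : ℕ) :
    Ico (2 ^ k) (2 ^ (k + 1)) ⊆ Nat.log 2 ⁻¹' {k} := fun _ hn =>
  (Nat.log_eq_iff (Or.inr ⟨one_lt_two, ((Nat.two_pow_pos k).trans_le hn.1).ne'⟩)).mpr hn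

lemma half_le_density_log_two_preimage {A : Set ℕ} {k : ℕ} (hk : k ∈ A) :
    (1 / 2 : ℝ) ≤ (Nat.card ↑(Nat.log 2 ⁻¹' A ∩ Icc 1 (2 ^ (k + 1))) : ℝ) / (2 ^ (k + 1) : ℕ) := by
  have hblock : Ico (2 ^ k) (2 ^ (k + 1)) ⊆ Nat.log 2 ⁻¹' A ∩ Icc 1 (2 ^ (k + 1)) :=
    fun n hn => ⟨preimage_mono (singleton_subset_iff.mpr hk)
      (Nat.Ico_pow_subset_log_two_preimage k hn), Nat.one_le_two_pow.trans hn.1, hn.2.le⟩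
  have hcard : 2 ^ k ≤ Nat.card ↑(Nat.log 2 ⁻¹' A ∩ Icc 1 (2 ^ (k + 1))) := by
    have := Nat.card_mono ((finite_Icc _ _).inter_of_right _) hblock
    simp only [Nat.card_eq_fintype_card, Fintype.card_ofFinset, Nat.card_Ico] at this
    omega
  rw [le_div_iff₀ (by positivity)]
  push_cast
  have : (2 ^ k : ℝ) ≤ Nat.card ↑(Nat.log 2 ⁻¹' A ∩ Icc 1 (2 ^ (k + 1))) := by exact_mod_cast hcard
  linarith [pow_succ (2 : ℝ) k]

lemma Nat.log_two_preimage_mem_densityZeroIdeal_iff (A : Set ℕ) :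
    Nat.log 2 ⁻¹' A ∈ densityZeroIdeal ↔ A.Finite := by
  refine ⟨fun hA => not_not.mp fun hinf => ?_, fun hA =>
    finite_mem_densityZeroIdeal (hA.preimage' fun k _ => Nat.log_two_preimage_singleton_finite k)⟩
  refine notMem_densityZeroIdeal_of_frequently one_half_pos ?_ hA
  have hpow : Tendsto (fun k : ℕ => 2 ^ (k + 1)) atTop atTop :=
    (tendsto_pow_atTop_atTop_of_one_lt one_lt_two).comp (tendsto_add_atTop_nat 1)
  exact hpow.frequently ((Nat.frequently_atTop_iff_infinite.mpr hinf).mono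
    fun k hk => half_le_density_log_two_preimage hk)

lemma exists_IMad_superset (I : Set (Set ℕ)) {𝒜 : Set (Set ℕ)} (hpos : ∀ A ∈ 𝒜, A ∉ I)
    (hdisj : 𝒜.Pairwise fun A B => A ∩ B ∈ I) :
    ∃ ℳ, 𝒜 ⊆ ℳ ∧ IMad I ℳ := by
  let AD : Set (Set (Set ℕ)) := {ℬ | (∀ A ∈ ℬ, A ∉ I) ∧ ℬ.Pairwise fun A B => A ∩ B ∈ I}
  have hchain : ∀ c ⊆ AD, IsChain (· ⊆ ·) c → c.Nonempty → ∃ ub ∈ AD, ∀ ℬ ∈ c, ℬ ⊆ ub := by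
    refine fun c hcAD hc _ => ⟨⋃₀ c, ⟨?_, ?_⟩, fun _ => subset_sUnion_of_mem⟩
    · rintro A ⟨ℬ, hℬ, hA⟩
      exact (hcAD hℬ).1 A hA
    · rintro A ⟨ℬ₁, hℬ₁, hA⟩ B ⟨ℬ₂, hℬ₂, hB⟩ hAB
      rcases hc.total hℬ₁ hℬ₂ with h | h
      · exact (hcAD hℬ₂).2 (h hA) hB hAB
      · exact (hcAD hℬ₁).2 hA (h hB) hAB
  obtain ⟨ℳ, h𝒜ℳ, ⟨hℳpos, hℳdisj⟩, hmax⟩ := zorn_subset_nonempty AD hchain 𝒜 ⟨hpos, hdisj⟩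
  refine ⟨ℳ, h𝒜ℳ, hℳpos, fun A hA B hB => hℳdisj hA hB, fun X hX => ?_⟩
  by_contra! hXℳ
  have hinsert : insert X ℳ ∈ AD := by
    refine ⟨forall_mem_insert.mpr ⟨hX, hℳpos⟩, hℳdisj.insert fun A hA _ => ⟨hXℳ A hA, ?_⟩⟩
    rw [inter_comm]
    exact hXℳ A hA
  exact hX (inter_self X ▸ hXℳ X (hmax hinsert (subset_insert X ℳ) (mem_insert X ℳ)))

lemma exists_uncountable_IMad {ι : Type*} [Uncountable ι] (I : Set (Set ℕ)) (F : ι → Set ℕ)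
    (hpos : ∀ i, F i ∉ I) (hdisj : Pairwise fun i j => F i ∩ F j ∈ I) :
    ∃ 𝒜, IMad I 𝒜 ∧ ¬ 𝒜.Countable := by
  have hF : F.Injective := fun i j hij => by_contra fun hne => by
    have h : F i ∩ F j ∈ I := hdisj hne
    rw [hij, inter_self] at h
    exact hpos j h
  have hrange : (range F).Pairwise fun A B => A ∩ B ∈ I := by
    rintro _ ⟨i, rfl⟩ _ ⟨j, rfl⟩ hne
    exact hdisj fun hij => hne (congrArg F hij)
  obtain ⟨ℳ, hFℳ, hℳ⟩ := exists_IMad_superset I (forall_mem_range.mpr hpos) hrange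
  refine ⟨ℳ, hℳ, fun hc => ?_⟩
  have := (hc.mono hFℳ).to_subtype
  exact not_countable (rangeFactorization_injective.mpr hF).countable

def prefixCode (x : ℕ → Bool) (n : ℕ) : ℕ := Encodable.encode ((List.range n).map x)

lemma prefixCode_eq {x y : ℕ → Bool} {n m : ℕ} (h : prefixCode x n = prefixCode y m) :
    n = m ∧ ∀ i < n, x i = y i := by
  have hlist := Encodable.encode_injective h
  obtain rfl : n = m := by simpa using congrArg List.length hlist
  exact ⟨rfl, fun i hi => List.map_inj_left.mp hlist i (List.mem_range.mpr hi)⟩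

lemma range_prefixCode_infinite (x : ℕ → Bool) : (range (prefixCode x)).Infinite :=
  infinite_range_of_injective fun _ _ h => (prefixCode_eq h).1

lemma range_prefixCode_inter_finite {x y : ℕ → Bool} (hxy : x ≠ y) :
    (range (prefixCode x) ∩ range (prefixCode y)).Finite := by
  obtain ⟨t, ht⟩ := Function.ne_iff.mp hxy
  refine ((finite_Iic t).image (prefixCode x)).subset ?_
  rintro _ ⟨⟨n, rfl⟩, m, hm⟩
  obtain ⟨-, hpre⟩ := prefixCode_eq hm.symm
  exact ⟨n, not_lt.mp fun htn => ht (hpre t htn), rfl⟩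

instance : Uncountable (ℕ → Bool) := by
  rw [← not_countable_iff, ← Cardinal.mk_le_aleph0_iff]
  simpa using Cardinal.aleph0_lt_continuum

/-- Z admits a finite-to-one f with f⁻¹(A) ∈ Z iff A finite; consequently
there is an uncountable Z-mad family. -/
theorem densityZero_rudinBlass_and_mad :
    (∃ f : ℕ → ℕ, (∀ n : ℕ, (f ⁻¹' {n}).Finite) ∧
      ∀ A : Set ℕ, f ⁻¹' A ∈ densityZeroIdeal ↔ A.Finite) ∧
    ∃ 𝒜 : Set (Set ℕ), IMad densityZeroIdeal 𝒜 ∧ ¬ 𝒜.Countable := by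
  have hlog := Nat.log_two_preimage_mem_densityZeroIdeal_iff
  refine ⟨⟨Nat.log 2, Nat.log_two_preimage_singleton_finite, hlog⟩, ?_⟩
  refine exists_uncountable_IMad densityZeroIdeal
    (fun x : ℕ → Bool => Nat.log 2 ⁻¹' range (prefixCode x))
    (fun x => (hlog _).not.mpr (range_prefixCode_infinite x))
    fun x y hxy => (hlog (range (prefixCode x) ∩ range (prefixCode y))).mpr
      (range_prefixCode_inter_finite hxy)
end

section
/- There is no bounded linear projection from ℓ∞ onto c₀ (Phillips' theorem), obtained as the special case I = Fin of: if I admits an uncountable I-mad family then c₀(I) ∩ ℓ∞ is uncomplemented in ℓ∞; here one uses an uncountable almost-disjoint family of infinite subsets of ω. -/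
open Set Filter

private lemma exists_q (r : ℝ) (n : ℕ) :
    ∃ q : ℚ, r - 1/(n+1) < (q:ℝ) ∧ (q:ℝ) < r - 1/(n+2) := by
  apply exists_rat_btwn
  have h1 : (0:ℝ) < n + 1 := by positivity
  have h2 : (0:ℝ) < n + 2 := by positivity
  have : (1:ℝ)/(n+2) < 1/(n+1) := by
    apply one_div_lt_one_div_of_lt h1; linarith
  linarith

noncomputable def qseq (r : ℝ) (n : ℕ) : ℚ := (exists_q r n).choose

lemma qseq_lt (r : ℝ) (n : ℕ) : r - 1/(n+1) < (qseq r n : ℝ) := (exists_q r n).choose_spec.1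

lemma qseq_lt' (r : ℝ) (n : ℕ) : (qseq r n : ℝ) < r - 1/(n+2) := (exists_q r n).choose_spec.2

lemma qseq_strictMono (r : ℝ) : StrictMono (qseq r) := by
  apply strictMono_nat_of_lt_succ
  intro n
  have h1 := qseq_lt' r n
  have h2 := qseq_lt r (n+1)
  have : ((qseq r n : ℚ) : ℝ) < ((qseq r (n+1) : ℚ) : ℝ) := by
    have e : r - 1/((n:ℝ)+1+1) = r - 1/((n:ℝ)+2) := by ring_nf
    push_cast at h2
    rw [e] at h2; linarith
  exact_mod_cast this

lemma qseq_abs (r : ℝ) (n : ℕ) : |(qseq r n : ℝ) - r| < 1/(n+1) := by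
  have h1 := qseq_lt r n
  have h2 := qseq_lt' r n
  have h3 : (0:ℝ) < 1/(n+2) := by positivity
  rw [abs_sub_lt_iff]; constructor <;> linarith

noncomputable def adF (r : ℝ) : Set ℕ := Encodable.encode '' Set.range (qseq r)

lemma adF_infinite (r : ℝ) : (adF r).Infinite :=
  (Set.infinite_range_of_injective (qseq_strictMono r).injective).image
    Encodable.encode_injective.injOn

lemma adF_ad {r s : ℝ} (hrs : r ≠ s) : (adF r ∩ adF s).Finite := by
  rw [adF, adF, ← Set.image_inter Encodable.encode_injective]
  apply Set.Finite.image
  have hd : 0 < |r - s| / 2 := by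
    have : r - s ≠ 0 := sub_ne_zero.2 hrs
    positivity
  obtain ⟨N, hN⟩ := exists_nat_one_div_lt hd
  apply Set.Finite.subset (((Set.finite_Iio N).image (qseq r)).union ((Set.finite_Iio N).image (qseq s)))
  rintro q ⟨⟨n, rfl⟩, ⟨m, hm⟩⟩
  by_cases hn : n < N
  · exact Or.inl ⟨n, hn, rfl⟩
  · refine Or.inr ⟨m, ?_, hm⟩
    by_contra hmN
    simp only [Set.mem_Iio, not_lt] at hn hmN
    have h1 := qseq_abs r n
    have h2 := qseq_abs s m
    have hn' : (N:ℝ) ≤ n := by exact_mod_cast hn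
    have hm' : (N:ℝ) ≤ m := by exact_mod_cast hmN
    have e1 : (1:ℝ)/(n+1) ≤ 1/(N+1) := by
      apply one_div_le_one_div_of_le (by positivity); linarith
    have e2 : (1:ℝ)/(m+1) ≤ 1/(N+1) := by
      apply one_div_le_one_div_of_le (by positivity); linarith
    have hq : ((qseq s m : ℚ) : ℝ) = ((qseq r n : ℚ) : ℝ) := by exact_mod_cast hm
    rw [hq] at h2
    have tri : |r - s| ≤ |r - (qseq r n:ℝ)| + |(qseq r n:ℝ) - s| := abs_sub_le _ _ _
    have ec : |r - (qseq r n:ℝ)| = |(qseq r n:ℝ) - r| := abs_sub_comm _ _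
    linarith

lemma aux_tendsto (x : ℕ → ℝ) (h : {n | x n ≠ 0}.Finite) :
    Tendsto x atTop (nhds 0) := by
  obtain ⟨N, hN⟩ := h.bddAbove
  apply Tendsto.congr' _ tendsto_const_nhds
  filter_upwards [eventually_gt_atTop N] with m hm
  by_contra h'
  exact absurd (hN (Set.mem_setOf.2 fun hx => h' hx.symm)) (not_le.2 hm)

lemma key_finite (φ : BoundedContinuousFunction ℕ ℝ →L[ℝ] ℝ)
    (hφ : ∀ x : BoundedContinuousFunction ℕ ℝ,
      Tendsto (fun n => x n) atTop (nhds 0) → φ x = 0)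
    (A : ℝ → Set ℕ) (had : ∀ r s, r ≠ s → (A r ∩ A s).Finite)
    {ε : ℝ} (hε : 0 < ε) :
    {r : ℝ | ε ≤ |φ (ind (A r))|}.Finite := by
  by_contra hinf
  obtain ⟨s, hs_sub, hs_card⟩ :=
    Set.Infinite.exists_subset_card_eq hinf (⌈‖φ‖ / ε⌉₊ + 1)
  set B : ℝ → Set ℕ := fun i => A i \ ⋃ j ∈ (↑(s.erase i) : Set ℝ), A j with hB
  have hBsub : ∀ i, B i ⊆ A i := fun i => Set.diff_subset
  have hdiff : ∀ i ∈ s, φ (ind (A i)) = φ (ind (B i)) := by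
    intro i hi
    have hfin : (A i ∩ ⋃ j ∈ (↑(s.erase i) : Set ℝ), A j).Finite := by
      rw [Set.inter_iUnion₂]
      exact (s.erase i).finite_toSet.biUnion fun j hj =>
        had i j fun h => (Finset.mem_erase.mp hj).1 h.symm
    have hsupp : {n | (ind (A i) - ind (B i)) n ≠ 0} ⊆
        A i ∩ ⋃ j ∈ (↑(s.erase i) : Set ℝ), A j := by
      intro n hn
      simp only [BoundedContinuousFunction.coe_sub, Pi.sub_apply, ind_apply,
        Set.mem_setOf_eq] at hn
      by_contra hn'
      apply hn
      by_cases hA : n ∈ A i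
      · have hBn : n ∈ B i := ⟨hA, fun hU => hn' ⟨hA, hU⟩⟩
        rw [Set.indicator_of_mem hA, Set.indicator_of_mem hBn]; ring
      · rw [Set.indicator_of_notMem hA,
          Set.indicator_of_notMem fun h => hA (hBsub i h)]; ring
    have h0 := hφ (ind (A i) - ind (B i)) (aux_tendsto _ (hfin.subset hsupp))
    rw [map_sub] at h0; linarith
  have hdisj : ∀ i ∈ s, ∀ j ∈ s, i ≠ j → ∀ n, n ∈ B i → n ∉ B j := by
    intro i hi j hj hij n hni hnj
    refine hnj.2 (Set.mem_biUnion ?_ hni.1)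
    simp [Finset.mem_erase, hij, hi]
  set c : ℝ → ℝ := fun i => if φ (ind (B i)) < 0 then -1 else 1 with hc
  have hc1 : ∀ i, |c i| ≤ 1 := by
    intro i; rw [hc]; dsimp only; split_ifs <;> simp
  have hcφ : ∀ i, c i * φ (ind (B i)) = |φ (ind (B i))| := by
    intro i; rw [hc]; dsimp only; split_ifs with h
    · rw [abs_of_neg h]; ring
    · rw [abs_of_nonneg (not_lt.mp h), one_mul]
  set x : BoundedContinuousFunction ℕ ℝ := ∑ i ∈ s, c i • ind (B i) with hx
  have hxapp : ∀ m, x m = ∑ i ∈ s, c i * (B i).indicator 1 m := by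
    intro m
    rw [hx]
    simp [ind_apply]
  have hxnorm : ‖x‖ ≤ 1 := by
    rw [BoundedContinuousFunction.norm_le zero_le_one]
    intro m
    rw [Real.norm_eq_abs, hxapp]
    by_cases hex : ∃ i ∈ s, m ∈ B i
    · obtain ⟨i0, hi0, hmB⟩ := hex
      rw [Finset.sum_eq_single_of_mem i0 hi0 fun j hj hne => by
        rw [Set.indicator_of_notMem (hdisj i0 hi0 j hj (fun h => hne h.symm) m hmB)]
        ring]
      rw [Set.indicator_of_mem hmB]
      simpa using hc1 i0
    · push_neg at hex
      rw [Finset.sum_eq_zero fun j hj => by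
        rw [Set.indicator_of_notMem (hex j hj)]; ring]
      norm_num
  have hφx : φ x = ∑ i ∈ s, c i * φ (ind (B i)) := by
    rw [hx, map_sum]
    exact Finset.sum_congr rfl fun i _ => by rw [map_smul]; rfl
  have h1 : (s.card : ℝ) * ε ≤ φ x := by
    rw [hφx]
    calc (s.card : ℝ) * ε = ∑ _i ∈ s, ε := by rw [Finset.sum_const, nsmul_eq_mul]
      _ ≤ ∑ i ∈ s, c i * φ (ind (B i)) := by
          refine Finset.sum_le_sum fun i hi => ?_
          rw [hcφ i, ← hdiff i hi]
          exact hs_sub hi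
  have h2 : φ x ≤ ‖φ‖ := by
    calc φ x ≤ |φ x| := le_abs_self _
      _ ≤ ‖φ‖ * ‖x‖ := by rw [← Real.norm_eq_abs]; exact φ.le_opNorm x
      _ ≤ ‖φ‖ * 1 := mul_le_mul_of_nonneg_left hxnorm (norm_nonneg φ)
      _ = ‖φ‖ := mul_one _
  have h3 : ‖φ‖ / ε < (s.card : ℝ) := by
    rw [hs_card]
    push_cast
    have := Nat.le_ceil (‖φ‖ / ε)
    linarith
  rw [div_lt_iff₀ hε] at h3
  linarith

/-- Phillips' theorem: no bounded linear projection from ℓ∞ onto c₀. -/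
theorem no_projection_onto_c0 :
    ¬ ∃ π : BoundedContinuousFunction ℕ ℝ →L[ℝ] BoundedContinuousFunction ℕ ℝ,
        Set.range π = {x : BoundedContinuousFunction ℕ ℝ |
            Tendsto (fun n => x n) atTop (nhds 0)} ∧
        ∀ x : BoundedContinuousFunction ℕ ℝ,
          Tendsto (fun n => x n) atTop (nhds 0) → π x = x := by
  rintro ⟨π, hrange, hproj⟩
  set φ : ℕ → (BoundedContinuousFunction ℕ ℝ →L[ℝ] ℝ) :=
    fun n => BoundedContinuousFunction.evalCLM ℝ n -
      (BoundedContinuousFunction.evalCLM ℝ n).comp π with hφdef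
  have hφ0 : ∀ n (x : BoundedContinuousFunction ℕ ℝ),
      Tendsto (fun k => x k) atTop (nhds 0) → φ n x = 0 := by
    intro n x hx
    simp [hφdef, hproj x hx]
  have hcount : {r : ℝ | ∃ n, φ n (ind (adF r)) ≠ 0}.Countable := by
    have hsub : {r : ℝ | ∃ n, φ n (ind (adF r)) ≠ 0} ⊆
        ⋃ (n : ℕ) (k : ℕ), {r : ℝ | 1/(k+1) ≤ |φ n (ind (adF r))|} := by
      rintro r ⟨n, hn⟩
      obtain ⟨k, hk⟩ := exists_nat_one_div_lt (abs_pos.2 hn)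
      exact Set.mem_iUnion.2 ⟨n, Set.mem_iUnion.2 ⟨k, le_of_lt hk⟩⟩
    refine Set.Countable.mono hsub ?_
    exact Set.countable_iUnion fun n => Set.countable_iUnion fun k =>
      (key_finite (φ n) (hφ0 n) adF (fun r s hrs => adF_ad hrs) (by positivity)).countable
  obtain ⟨r, hr⟩ : ∃ r : ℝ, ∀ n, φ n (ind (adF r)) = 0 := by
    by_contra h
    push_neg at h
    have huniv : (Set.univ : Set ℝ) ⊆ {r : ℝ | ∃ n, φ n (ind (adF r)) ≠ 0} :=
      fun r _ => h r
    exact Cardinal.not_countable_real (hcount.mono huniv)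
  have hπ : π (ind (adF r)) = ind (adF r) := by
    ext m
    have h0 := hr m
    simp only [hφdef, ContinuousLinearMap.sub_apply, ContinuousLinearMap.coe_comp',
      Function.comp_apply, BoundedContinuousFunction.evalCLM_apply] at h0
    linarith
  have hmem : ind (adF r) ∈ Set.range π := ⟨_, hπ⟩
  rw [hrange] at hmem
  have hfreq : ∃ᶠ m in atTop, m ∈ adF r :=
    Nat.frequently_atTop_iff_infinite.2 (adF_infinite r)
  have hev : ∀ᶠ m in atTop, ind (adF r) m < 1 :=
    hmem.eventually_lt_const one_pos
  obtain ⟨m, hmA, hlt⟩ := (hfreq.and_eventually hev).exists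
  rw [ind_apply, Set.indicator_of_mem hmA] at hlt
  simp at hlt
end
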